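/- arXiv:2511.15635 — 2 statements merged into one kernel-verified Lean document; each statement's English description precedes it below -/
import Mathlib

section
/- Let g ∈ ℚ[X] be an irreducible polynomial of degree ≥ 2 with Galois group G acting on its set of roots. Then there exists σ ∈ G acting without fixed points on the roots of g. -/
open Polynomial

namespace MulAction

variable {G α : Type*} [Group G] [MulAction G α]

theorem sum_card_fixedBy_eq_card_group [Fintype G] [Fintype α] [DecidableEq α]
    [IsPretransitive G α] [Nonempty α] :
    ∑ g : G, Fintype.card (fixedBy α g) = Fintype.card G := by
  obtain ⟨_⟩ := (pretransitive_iff_unique_quotient_of_nonempty G α).mp ‹_›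
  have := Fintype.ofFinite (orbitRel.Quotient G α)
  rw [sum_card_fixedBy_eq_card_orbits_mul_card_group, Fintype.card_unique, one_mul]

/-- Jordan's theorem. By Burnside's lemma the fixed-point counts average to one; if none of
them were zero they would all equal one, but the identity fixes at least two points. -/
theorem exists_forall_smul_ne_of_isPretransitive [Finite G] [Finite α] [Nontrivial α]
    [IsPretransitive G α] : ∃ g : G, ∀ x : α, g • x ≠ x := by
  classical
  have := Fintype.ofFinite G
  have := Fintype.ofFinite α
  by_contra! hfix
  have hpos : ∀ g ∈ (Finset.univ : Finset G), 1 ≤ Fintype.card (fixedBy α g) := fun g _ ↦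
    let ⟨x, hx⟩ := hfix g
    Fintype.card_pos_iff.mpr ⟨⟨x, hx⟩⟩
  have hone : ∀ g : G, Fintype.card (fixedBy α g) = 1 := by
    have hsum : ∑ _g : G, 1 = ∑ g : G, Fintype.card (fixedBy α g) := by
      rw [sum_card_fixedBy_eq_card_group, Finset.sum_const, smul_eq_mul, mul_one,
        Finset.card_univ]
    simpa [eq_comm] using (Finset.sum_eq_sum_iff_of_le hpos).mp hsum
  have hfix_one : Fintype.card (fixedBy α (1 : G)) = Fintype.card α := by
    simp only [fixedBy_one_eq_univ, Fintype.card_setUniv]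
  exact Fintype.one_lt_card.ne' (hfix_one ▸ hone 1)

end MulAction

theorem Polynomial.Gal.galActionAux_isPretransitive {F : Type*} [Field F] {p : F[X]}
    (hp : Irreducible p) : MulAction.IsPretransitive p.Gal (p.rootSet p.SplittingField) := by
  refine ⟨fun x y ↦ ?_⟩
  have hx := minpoly.eq_of_irreducible hp (mem_rootSet.mp x.2).2
  have hy := minpoly.eq_of_irreducible hp (mem_rootSet.mp y.2).2
  obtain ⟨σ, hσ⟩ := (Normal.minpoly_eq_iff_mem_orbit p.SplittingField).mp (hy.symm.trans hx)
  exact ⟨σ, Subtype.ext hσ⟩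

theorem Polynomial.nontrivial_rootSet_splittingField {F : Type*} [Field F] {p : F[X]}
    (hp : p.Separable) (hdeg : 2 ≤ p.natDegree) :
    Nontrivial (p.rootSet p.SplittingField) := by
  rw [← Fintype.one_lt_card_iff_nontrivial,
    card_rootSet_eq_natDegree hp (SplittingField.splits p)]
  omega

theorem Polynomial.Gal.exists_forall_apply_ne_of_irreducible {F : Type*} [Field F] {p : F[X]}
    (hp : Irreducible p) (hsep : p.Separable) (hdeg : 2 ≤ p.natDegree) :
    ∃ σ : p.Gal, ∀ x ∈ p.rootSet p.SplittingField, σ x ≠ x := by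
  have := galActionAux_isPretransitive hp
  have := nontrivial_rootSet_splittingField hsep hdeg
  obtain ⟨σ, hσ⟩ := MulAction.exists_forall_smul_ne_of_isPretransitive (G := p.Gal)
    (α := p.rootSet p.SplittingField)
  exact ⟨σ, fun x hx hσx ↦ hσ ⟨x, hx⟩ (Subtype.ext hσx)⟩

/-- Let `g ∈ ℚ[X]` be irreducible of degree at least `2`. Then there is an element
of the Galois group of `g` (an automorphism of its splitting field over `ℚ`) acting
without fixed points on the roots of `g`. -/
theorem exists_gal_without_fixed_root (g : Polynomial ℚ) (hirr : Irreducible g)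
    (hdeg : 2 ≤ g.natDegree) :
    ∃ σ : g.SplittingField ≃ₐ[ℚ] g.SplittingField,
      ∀ x ∈ g.rootSet g.SplittingField, σ x ≠ x :=
  Gal.exists_forall_apply_ne_of_irreducible hirr hirr.separable hdeg
end

section
/- The polynomial g(T) = −27·T⁸ − 1 (equivalently 27·T⁸ + 1) is irreducible over ℚ. -/
open Polynomial

open IntermediateField in
lemma aux_irr : Irreducible (X ^ 8 + C (1/27 : ℚ)) := by
  -- X^8 + 3 is irreducible over ℤ by Eisenstein, hence over ℚ
  have hZ : Irreducible ((X : ℤ[X]) ^ 8 + C 3) := by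
    have hdeg : ((X : ℤ[X]) ^ 8 + C 3).natDegree = 8 := by
      compute_degree!
    apply Polynomial.IsEisensteinAt.irreducible (𝓟 := Ideal.span {(3 : ℤ)})
    · refine ⟨?_, ?_, ?_⟩
      · rw [Polynomial.Monic.leadingCoeff (by monicity!)]
        intro h
        rw [Ideal.mem_span_singleton] at h
        norm_num at h
      · intro n hn
        rw [hdeg] at hn
        rcases Nat.eq_zero_or_pos n with h0 | h0
        · subst h0
          simp [Ideal.mem_span_singleton]
        · have : ((X : ℤ[X]) ^ 8 + C 3).coeff n = 0 := by
            rw [coeff_add, coeff_X_pow, coeff_C]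
            have h1 : n ≠ 8 := by omega
            have h2 : n ≠ 0 := by omega
            simp [h1, h2]
          rw [this]; exact Ideal.zero_mem _
      · rw [Ideal.span_singleton_pow, Ideal.mem_span_singleton]
        intro h
        simp at h
    · rw [Ideal.span_singleton_prime (by norm_num)]
      norm_num
    · exact (Polynomial.Monic.isPrimitive (by monicity!))
    · rw [hdeg]; norm_num
  have hQ3 : Irreducible (X ^ 8 + C (3 : ℚ)) := by
    have := (Polynomial.IsPrimitive.Int.irreducible_iff_irreducible_map_cast
      (p := (X : ℤ[X]) ^ 8 + C 3) (Polynomial.Monic.isPrimitive (by monicity!))).mp hZ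
    have hmap : ((X : ℤ[X]) ^ 8 + C 3).map (Int.castRingHom ℚ) = X ^ 8 + C (3:ℚ) := by
      simp [Polynomial.map_add, Polynomial.map_pow, map_ofNat]
    rwa [hmap] at this
  -- take β ∈ ℂ with β ^ 8 = -3
  obtain ⟨β, hβ⟩ := IsAlgClosed.exists_pow_nat_eq (-3 : ℂ) (n := 8) (by norm_num)
  have hβroot : (Polynomial.aeval β) (X ^ 8 + C (3 : ℚ)) = 0 := by
    simp [hβ]
  have hβmonic : (X ^ 8 + C (3 : ℚ)).Monic := by monicity!
  have hβint : IsIntegral ℚ β := ⟨X ^ 8 + C (3 : ℚ), hβmonic, by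
    simpa [Polynomial.aeval_def] using hβroot⟩
  have hminβ : minpoly ℚ β = X ^ 8 + C (3 : ℚ) :=
    (minpoly.eq_of_irreducible_of_monic hQ3 hβroot hβmonic).symm
  -- α = β^5 / 3
  set α : ℂ := β ^ 5 / 3 with hαdef
  have h40 : β ^ 40 = -243 := by
    have h : β ^ 40 = (β ^ 8) ^ 5 := by ring
    rw [h, hβ]; norm_num
  have hα8 : α ^ 8 = -1/27 := by
    rw [hαdef, div_pow]
    have h : (β ^ 5) ^ 8 = β ^ 40 := by ring
    rw [h, h40]; norm_num
  have h25 : β ^ 25 = -27 * β := by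
    have h : β ^ 25 = (β ^ 8) ^ 3 * β := by ring
    rw [h, hβ]; ring
  have hβα : β = -9 * α ^ 5 := by
    have hβ5 : α ^ 5 = -β / 9 := by
      rw [hαdef, div_pow]
      have h : (β ^ 5) ^ 5 = β ^ 25 := by ring
      rw [h, h25]; ring_nf
    rw [hβ5]; ring
  have hgmonic : (X ^ 8 + C (1/27 : ℚ)).Monic := by monicity!
  have hαroot : (Polynomial.aeval α) (X ^ 8 + C (1/27 : ℚ)) = 0 := by
    simp [hα8]
    norm_num
  have hαint : IsIntegral ℚ α := ⟨X ^ 8 + C (1/27 : ℚ), hgmonic, by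
    simpa [Polynomial.aeval_def] using hαroot⟩
  -- ℚ(α) = ℚ(β)
  have hadj : ℚ⟮α⟯ = ℚ⟮β⟯ := by
    apply le_antisymm
    · rw [IntermediateField.adjoin_simple_le_iff]
      have hβmem : β ∈ ℚ⟮β⟯ := IntermediateField.mem_adjoin_simple_self ℚ β
      have h3mem : (3 : ℂ) ∈ ℚ⟮β⟯ := by
        have := IntermediateField.algebraMap_mem ℚ⟮β⟯ (3 : ℚ)
        simpa using this
      rw [hαdef]
      exact div_mem (pow_mem hβmem 5) h3mem
    · rw [IntermediateField.adjoin_simple_le_iff]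
      have hαmem : α ∈ ℚ⟮α⟯ := IntermediateField.mem_adjoin_simple_self ℚ α
      have h9mem : (-9 : ℂ) ∈ ℚ⟮α⟯ := by
        have := IntermediateField.algebraMap_mem ℚ⟮α⟯ (-9 : ℚ)
        simpa using this
      rw [hβα]
      exact mul_mem h9mem (pow_mem hαmem 5)
  -- degree of minpoly α is 8
  have hfr : Module.finrank ℚ ℚ⟮α⟯ = 8 := by
    rw [hadj, IntermediateField.adjoin.finrank hβint, hminβ]
    compute_degree!
  have hdegα : (minpoly ℚ α).natDegree = 8 := by
    rw [← IntermediateField.adjoin.finrank hαint, hfr]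
  -- minpoly α = X^8 + 1/27
  have hdvd : minpoly ℚ α ∣ X ^ 8 + C (1/27 : ℚ) := minpoly.dvd ℚ α hαroot
  obtain ⟨c, hc⟩ := hdvd
  have hcmonic : c.Monic := by
    have hm := hgmonic
    rw [hc] at hm
    have hml := (minpoly.monic hαint)
    have : (minpoly ℚ α * c).leadingCoeff = 1 := hm
    rwa [Polynomial.leadingCoeff_mul, hml.leadingCoeff, one_mul] at this
  have hdegc : c.natDegree = 0 := by
    have h8 : (X ^ 8 + C (1/27 : ℚ)).natDegree = 8 := by compute_degree!
    have := Polynomial.natDegree_mul (minpoly.ne_zero hαint) hcmonic.ne_zero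
    rw [← hc, h8, hdegα] at this
    omega
  have hc1 : c = 1 := hcmonic.natDegree_eq_zero.mp hdegc
  rw [hc1, mul_one] at hc
  rw [hc]
  exact minpoly.irreducible hαint

/-- The polynomial `g(T) = −27T⁸ − 1` (equivalently `27T⁸ + 1`) is irreducible over `ℚ`. -/
theorem g_irreducible :
    Irreducible ((-27) * X ^ 8 - 1 : Polynomial ℚ) ∧
      Irreducible (27 * X ^ 8 + 1 : Polynomial ℚ) := by
  have hC27 : (C (27 : ℚ) : ℚ[X]) = 27 := by
    simp [map_ofNat]
  have h27 : (27 * X ^ 8 + 1 : Polynomial ℚ) = C 27 * (X ^ 8 + C (1/27 : ℚ)) := by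
    rw [mul_add, ← C_mul, hC27]
    norm_num
  have h2 : Irreducible (27 * X ^ 8 + 1 : Polynomial ℚ) := by
    rw [h27, irreducible_isUnit_mul (isUnit_C.mpr (by norm_num))]
    exact aux_irr
  refine ⟨?_, h2⟩
  have hneg : ((-27) * X ^ 8 - 1 : Polynomial ℚ) = C (-1) * (27 * X ^ 8 + 1) := by
    rw [map_neg, map_one]
    ring
  rw [hneg, irreducible_isUnit_mul (isUnit_C.mpr (by norm_num))]
  exact h2
end
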